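/- Let K be a nonempty closed convex subset of R^n, u ∈ K, ξ ∈ R^n a fixed vector, y = μ + ξ, and μ̂ the projection of y onto K. Suppose t > 0 satisfies: for Z := sup over v ∈ K with ‖v − u‖ ≤ t of ξ^T(v − u), one has Z ≤ t²/2 + tσ√(2x) for given σ, x > 0. Then ‖μ̂ − μ‖² − ‖u − μ‖² ≤ (t + σ√(2x))². -/

import Mathlib

/-!
The projection `μ̂` satisfies the variational inequality `⟪y - μ̂, u - μ̂⟫ ≤ 0`, which gives the
basic inequality `‖μ̂ - μ‖² - ‖u - μ‖² ≤ 2⟪ξ, μ̂ - u⟫ - ‖μ̂ - u‖²`. If `μ̂` lies within distance `t`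
of `u`, then `⟪ξ, μ̂ - u⟫ ≤ Z`. Otherwise the point `u + (t / ‖μ̂ - u‖)(μ̂ - u)` of `K` is at
distance exactly `t`, so by homogeneity `⟪ξ, μ̂ - u⟫ ≤ ‖μ̂ - u‖ Z / t`. In both cases the bound on
`Z` and `2ab - b² ≤ a²` finish the proof.
-/

open scoped RealInnerProductSpace

section InnerProductSpace

variable {E : Type*} [NormedAddCommGroup E] [InnerProductSpace ℝ E]

theorem real_inner_sub_le_zero_of_forall_norm_sub_le {K : Set E} (hK : Convex ℝ K)
    {y p : E} (hp : p ∈ K) (hmin : ∀ w ∈ K, ‖y - p‖ ≤ ‖y - w‖) {w : E} (hw : w ∈ K) :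
    ⟪y - p, w - p⟫ ≤ 0 := by
  have : Nonempty K := ⟨⟨p, hp⟩⟩
  refine (norm_eq_iInf_iff_real_inner_le_zero hK hp).mp ?_ w hw
  exact le_antisymm (le_ciInf fun w => hmin w w.2)
    (ciInf_le ⟨0, Set.forall_mem_range.2 fun w => norm_nonneg _⟩ (⟨p, hp⟩ : K))

theorem norm_sub_sq_sub_norm_sub_sq_le {y μ p u : E} (hvar : ⟪y - p, u - p⟫ ≤ 0) :
    ‖p - μ‖ ^ 2 - ‖u - μ‖ ^ 2 ≤ 2 * ⟪y - μ, p - u⟫ - ‖p - u‖ ^ 2 := by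
  have identity (a c e : E) :
      ‖a‖ ^ 2 - ‖c‖ ^ 2 + ‖a - c‖ ^ 2 - 2 * ⟪e, a - c⟫ = 2 * ⟪e - a, c - a⟫ := by
    simp only [norm_sub_sq_real, inner_sub_left, inner_sub_right, real_inner_self_eq_norm_sq]
    ring
  have := identity (p - μ) (u - μ) (y - μ)
  simp only [sub_sub_sub_cancel_right] at this
  linarith

theorem mul_real_inner_sub_le_max_mul {K : Set E} (hK : Convex ℝ K) {u p : E}
    (hu : u ∈ K) (hp : p ∈ K) (ξ : E) {t Z : ℝ} (ht : 0 < t)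
    (hZ : ∀ v ∈ K, ‖v - u‖ ≤ t → ⟪ξ, v - u⟫ ≤ Z) :
    t * ⟪ξ, p - u⟫ ≤ max t ‖p - u‖ * Z := by
  rcases le_or_gt ‖p - u‖ t with hnear | hfar
  · rw [max_eq_left hnear]
    exact mul_le_mul_of_nonneg_left (hZ p hp hnear) ht.le
  · set b := ‖p - u‖
    have hb : 0 < b := ht.trans hfar
    rw [max_eq_right hfar.le]
    set α := t / b
    have hα : α ∈ Set.Icc (0 : ℝ) 1 := ⟨by positivity, (div_le_one hb).mpr hfar.le⟩
    have hv : u + α • (p - u) ∈ K := by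
      simpa using hK.add_smul_sub_mem hu hp hα
    have hαZ := hZ _ hv (by
      rw [add_sub_cancel_left, norm_smul, Real.norm_of_nonneg hα.1, div_mul_cancel₀ _ hb.ne'])
    rw [add_sub_cancel_left, real_inner_smul_right] at hαZ
    calc t * ⟪ξ, p - u⟫ = b * (α * ⟪ξ, p - u⟫) := by rw [← mul_assoc, mul_div_cancel₀ _ hb.ne']
      _ ≤ b * Z := mul_le_mul_of_nonneg_left hαZ hb.le

theorem bddAbove_real_inner_sub_of_norm_sub_le (K : Set E) (u ξ : E) (t : ℝ) :
    BddAbove {r : ℝ | ∃ v ∈ K, ‖v - u‖ ≤ t ∧ r = ⟪ξ, v - u⟫} := by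
  refine ⟨‖ξ‖ * t, ?_⟩
  rintro _ ⟨v, -, hv, rfl⟩
  exact (real_inner_le_norm _ _).trans (by gcongr)

end InnerProductSpace

theorem two_mul_sub_sq_le_of_le_max_mul {t s b I : ℝ} (ht : 0 < t) (hb : 0 ≤ b)
    (hI : I ≤ max t b * (t / 2 + s)) : 2 * I - b ^ 2 ≤ (t + s) ^ 2 := by
  rcases max_cases t b with ⟨hmax, -⟩ | ⟨hmax, htb⟩
  · rw [hmax] at hI
    nlinarith [sq_nonneg s, sq_nonneg b]
  · rw [hmax] at hI
    nlinarith [sq_nonneg (b - (t + s)), mul_nonneg ht.le hb]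

theorem stmt16_general (n : ℕ) (K : Set (EuclideanSpace ℝ (Fin n)))
    (hconv : Convex ℝ K)
    (u : EuclideanSpace ℝ (Fin n)) (hu : u ∈ K)
    (μ ξ y : EuclideanSpace ℝ (Fin n)) (hy : y = μ + ξ)
    (muhat : EuclideanSpace ℝ (Fin n))
    (hproj : muhat ∈ K ∧ ∀ w ∈ K, ‖y - muhat‖ ≤ ‖y - w‖)
    (t σ x : ℝ) (ht : 0 < t)
    (Z : ℝ) (hZdef : Z = sSup {r : ℝ | ∃ v ∈ K, ‖v - u‖ ≤ t ∧ r = ⟪ξ, v - u⟫})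
    (hZ : Z ≤ t ^ 2 / 2 + t * σ * Real.sqrt (2 * x)) :
    ‖muhat - μ‖ ^ 2 - ‖u - μ‖ ^ 2 ≤ (t + σ * Real.sqrt (2 * x)) ^ 2 := by
  obtain ⟨hmuhat, hmin⟩ := hproj
  have hbasic := norm_sub_sq_sub_norm_sub_sq_le (μ := μ)
    (real_inner_sub_le_zero_of_forall_norm_sub_le hconv hmuhat hmin hu)
  rw [hy, add_sub_cancel_left] at hbasic
  have hlocal : ∀ v ∈ K, ‖v - u‖ ≤ t → ⟪ξ, v - u⟫ ≤ Z := fun v hv hvt =>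
    hZdef ▸ le_csSup (bddAbove_real_inner_sub_of_norm_sub_le K u ξ t) ⟨v, hv, hvt, rfl⟩
  set R := max t ‖muhat - u‖
  have hR : 0 ≤ R := ht.le.trans (le_max_left _ _)
  refine hbasic.trans
    (two_mul_sub_sq_le_of_le_max_mul ht (norm_nonneg _) (le_of_mul_le_mul_left ?_ ht))
  calc t * ⟪ξ, muhat - u⟫ ≤ R * Z := mul_real_inner_sub_le_max_mul hconv hu hmuhat ξ ht hlocal
    _ ≤ R * (t ^ 2 / 2 + t * σ * Real.sqrt (2 * x)) := mul_le_mul_of_nonneg_left hZ hR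
    _ = t * (R * (t / 2 + σ * Real.sqrt (2 * x))) := by ring

/-- Deterministic core of the localized-Gaussian-width sharp oracle inequality:
if `μ̂` is the projection of `y = μ + ξ` onto the nonempty closed convex set `K`,
`u ∈ K`, and the localized supremum `Z = sup {⟪ξ, v − u⟫ : v ∈ K, ‖v − u‖ ≤ t}`
satisfies `Z ≤ t²/2 + tσ√(2x)`, then
`‖μ̂ − μ‖² − ‖u − μ‖² ≤ (t + σ√(2x))²`. -/
theorem stmt16 (n : ℕ) (K : Set (EuclideanSpace ℝ (Fin n))) (hne : K.Nonempty)
    (hcl : IsClosed K) (hconv : Convex ℝ K)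
    (u : EuclideanSpace ℝ (Fin n)) (hu : u ∈ K)
    (μ ξ y : EuclideanSpace ℝ (Fin n)) (hy : y = μ + ξ)
    (muhat : EuclideanSpace ℝ (Fin n))
    (hproj : muhat ∈ K ∧ ∀ w ∈ K, ‖y - muhat‖ ≤ ‖y - w‖)
    (t σ x : ℝ) (ht : 0 < t) (hσ : 0 < σ) (hx : 0 < x)
    (Z : ℝ) (hZdef : Z = sSup {r : ℝ | ∃ v ∈ K, ‖v - u‖ ≤ t ∧ r = ⟪ξ, v - u⟫})
    (hZ : Z ≤ t ^ 2 / 2 + t * σ * Real.sqrt (2 * x)) :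
    ‖muhat - μ‖ ^ 2 - ‖u - μ‖ ^ 2 ≤ (t + σ * Real.sqrt (2 * x)) ^ 2 :=
  stmt16_general n K hconv u hu μ ξ y hy muhat hproj t σ x ht Z hZdef hZ
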